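/- If V is an f-static potential, i.e. F_g*(V) = 0 and F_f*(V) = 0 on M with V not identically zero, then S_f ≡ 0 on M, assuming that V cannot vanish on any nonempty open set. -/

import Mathlib

/-! Tracing `F_g*(V) = 0` and adding `(n - 1)/2` times `F_f*(V) = 0` cancels every derivative
of `V` and leaves `-(1/2) V S_f = 0`. Hence `S_f` vanishes wherever `V` does not, which is a dense
set, and so everywhere by continuity. -/

theorem trace_Fg_add_mul_Ff_eq_neg_half_mul_Sf {T : Type*} [AddCommGroup T] [Module ℝ T]
    (tr : T →ₗ[ℝ] ℝ) {n : ℝ} (hn : n - 1 ≠ 0) (g Ric Hessf dfdf HessV : T)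
    (V R Δf Gff ΔV GVf Sf : ℝ) (htrg : tr g = n) (htrHV : tr HessV = ΔV)
    (htrRic : tr Ric = R) (htrHf : tr Hessf = Δf) (htrdf : tr dfdf = Gff)
    (hSf : Sf = R + 2 * Δf - ((n - 2) / (n - 1)) * Gff) :
    tr (HessV - ΔV • g + GVf • g - V • (Ric + Hessf + (1 / (n - 1)) • dfdf)
        + ((1 / 2) * V * Sf) • g)
      + ((n - 1) / 2) * (2 * ΔV - (2 * n / (n - 1)) * GVf - (2 / (n - 1)) * V * Δf
        + (2 / (n - 1)) * V * Gff - V * Sf)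
      = -(1 / 2) * V * Sf := by
  simp only [map_add, map_sub, map_smul, smul_eq_mul, htrg, htrHV, htrRic, htrHf, htrdf]
  subst hSf
  field_simp
  ring

theorem eq_zero_of_mul_eq_zero_of_dense {M R : Type*} [TopologicalSpace M] [TopologicalSpace R]
    [T2Space R] [MulZeroClass R] [NoZeroDivisors R] {V S : M → R} (hS : Continuous S)
    (hV : Dense {x | V x ≠ 0}) (h : ∀ x, V x * S x = 0) : S = 0 :=
  hS.ext_on hV continuous_const fun x hx => (mul_eq_zero.1 (h x)).resolve_left hx

theorem stmt_5_general (M : Type*) [TopologicalSpace M] (n : ℕ) (hn : 2 ≤ n)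
    (T : Type*) [AddCommGroup T] [Module ℝ T] (tr : T →ₗ[ℝ] ℝ)
    (g Ric Hessf dfdf HessV FgV : M → T)
    (V R Δf Gff ΔV GVf Sf FfV : M → ℝ)
    (htrg : ∀ x, tr (g x) = n) (htrHV : ∀ x, tr (HessV x) = ΔV x)
    (htrRic : ∀ x, tr (Ric x) = R x) (htrHf : ∀ x, tr (Hessf x) = Δf x)
    (htrdf : ∀ x, tr (dfdf x) = Gff x)
    (hSf : ∀ x, Sf x = R x + 2 * Δf x - (((n : ℝ) - 2) / ((n : ℝ) - 1)) * Gff x)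
    (hFgdef : ∀ x, FgV x = HessV x - ΔV x • g x + GVf x • g x
      - V x • (Ric x + Hessf x + ((1 : ℝ) / ((n : ℝ) - 1)) • dfdf x)
      + ((1 / 2) * V x * Sf x) • g x)
    (hFfdef : ∀ x, FfV x = 2 * ΔV x - (2 * (n : ℝ) / ((n : ℝ) - 1)) * GVf x
      - (2 / ((n : ℝ) - 1)) * V x * Δf x + (2 / ((n : ℝ) - 1)) * V x * Gff x
      - V x * Sf x)
    (hSfcont : Continuous Sf)
    (hVopen : ∀ U : Set M, IsOpen U → U.Nonempty → ∃ x ∈ U, V x ≠ 0)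
    (hFg0 : ∀ x, FgV x = 0) (hFf0 : ∀ x, FfV x = 0) :
    ∀ x, Sf x = 0 := by
  have hn1 : (n : ℝ) - 1 ≠ 0 := by
    have : (2 : ℝ) ≤ n := by exact_mod_cast hn
    linarith
  have hVSf : ∀ x, V x * Sf x = 0 := fun x => by
    have h := trace_Fg_add_mul_Ff_eq_neg_half_mul_Sf tr hn1 (g x) (Ric x) (Hessf x) (dfdf x) (HessV x)
      (V x) (R x) (Δf x) (Gff x) (ΔV x) (GVf x) (Sf x) (htrg x) (htrHV x) (htrRic x) (htrHf x)
      (htrdf x) (hSf x)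
    rw [← hFgdef, ← hFfdef, hFg0, hFf0, map_zero, mul_zero] at h
    linarith
  have hVdense : Dense {x | V x ≠ 0} := dense_iff_inter_open.2 hVopen
  exact congrFun (eq_zero_of_mul_eq_zero_of_dense hSfcont hVdense hVSf)

/-- If V is an f-static potential, i.e. F_g*(V) = 0 and
F_f*(V) = 0 on M with V not identically zero, and V does not vanish on any
nonempty open set, then S_f ≡ 0 on M.
Formulated with tensor fields valued in an abstract space `T` with trace
map `tr`, the pointwise trace identities as hypotheses, and S_f continuous. -/
theorem stmt_5 (M : Type*) [TopologicalSpace M] (n : ℕ) (hn : 2 ≤ n)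
    (T : Type*) [AddCommGroup T] [Module ℝ T] (tr : T →ₗ[ℝ] ℝ)
    (g Ric Hessf dfdf HessV FgV : M → T)
    (V R Δf Gff ΔV GVf Sf FfV : M → ℝ)
    (htrg : ∀ x, tr (g x) = n) (htrHV : ∀ x, tr (HessV x) = ΔV x)
    (htrRic : ∀ x, tr (Ric x) = R x) (htrHf : ∀ x, tr (Hessf x) = Δf x)
    (htrdf : ∀ x, tr (dfdf x) = Gff x)
    (hSf : ∀ x, Sf x = R x + 2 * Δf x - (((n : ℝ) - 2) / ((n : ℝ) - 1)) * Gff x)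
    (hFgdef : ∀ x, FgV x = HessV x - ΔV x • g x + GVf x • g x
      - V x • (Ric x + Hessf x + ((1 : ℝ) / ((n : ℝ) - 1)) • dfdf x)
      + ((1 / 2) * V x * Sf x) • g x)
    (hFfdef : ∀ x, FfV x = 2 * ΔV x - (2 * (n : ℝ) / ((n : ℝ) - 1)) * GVf x
      - (2 / ((n : ℝ) - 1)) * V x * Δf x + (2 / ((n : ℝ) - 1)) * V x * Gff x
      - V x * Sf x)
    (hSfcont : Continuous Sf)
    (hVne : ∃ x, V x ≠ 0)
    (hVopen : ∀ U : Set M, IsOpen U → U.Nonempty → ∃ x ∈ U, V x ≠ 0)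
    (hFg0 : ∀ x, FgV x = 0) (hFf0 : ∀ x, FfV x = 0) :
    ∀ x, Sf x = 0 :=
  stmt_5_general M n hn T tr g Ric Hessf dfdf HessV FgV V R Δf Gff ΔV GVf Sf FfV htrg htrHV htrRic
    htrHf htrdf hSf hFgdef hFfdef hSfcont hVopen hFg0 hFf0
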